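/- For every real ν ≥ 0, every real α with |α| ≤ 1 and every real ξ > 0, one has ∑_{n=1}^∞ (ν+n) |C_n^ν(α)| n(n+2ν) φ_{ν,n}(ξ) ≤ ρ_ν ξ² 2^{2−ν} e^{3ξ} + ρ_ν (2ν+1) ξ 2^{1−ν} e^{3ξ}; in particular the series on the left converges. -/

import Mathlib

/-- For real `ν ≥ 0` and integer `n ≥ 0`, the function
`φ_{ν,n}(ξ) = ∑_{m=0}^∞ ξ^(n+2m) / (2^(ν+n+2m) Γ(m+1) Γ(ν+n+m+1))`. -/
noncomputable def phiBessel (ν : ℝ) (n : ℕ) (ξ : ℝ) : ℝ :=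
  ∑' m : ℕ, ξ ^ (n + 2 * m) /
    ((2 : ℝ) ^ (ν + n + 2 * (m : ℝ)) * Real.Gamma ((m : ℝ) + 1) * Real.Gamma (ν + n + m + 1))

/-- The Gegenbauer polynomial `C_n^ν` for `ν ≥ 0`: for `ν > 0`,
`C_n^ν(x) = (1/Γ(ν)) ∑_{m=0}^{⌊n/2⌋} (−1)^m Γ(ν+n−m) (2x)^(n−2m) / (m! (n−2m)!)`;
for `ν = 0`, `C_0^0(x) = 1` and, for `n ≥ 1`,
`C_n^0(x) = ∑_{m=0}^{⌊n/2⌋} (−1)^m Γ(n−m) (2x)^(n−2m) / (Γ(m+1) Γ(n−2m+1))`. -/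
noncomputable def gegenbauer (ν : ℝ) (n : ℕ) (x : ℝ) : ℝ :=
  if ν = 0 then
    (if n = 0 then 1 else
      ∑ m ∈ Finset.range (n / 2 + 1),
        (-1 : ℝ) ^ m * Real.Gamma ((n : ℝ) - m) * (2 * x) ^ (n - 2 * m) /
          (Real.Gamma ((m : ℝ) + 1) * Real.Gamma ((n : ℝ) - 2 * m + 1)))
  else
    (1 / Real.Gamma ν) * ∑ m ∈ Finset.range (n / 2 + 1),
      (-1 : ℝ) ^ m * Real.Gamma (ν + n - m) * (2 * x) ^ (n - 2 * m) /
        ((m.factorial : ℝ) * ((n - 2 * m).factorial : ℝ))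

/-- `ρ_0 = 1` and `ρ_ν = 1/Γ(ν)` for `ν > 0`. -/
noncomputable def rhoNu (ν : ℝ) : ℝ := if ν = 0 then 1 else 1 / Real.Gamma ν

/-! Bounding termwise for `|α| ≤ 1`, `Γ(y) m! ≤ Γ(y + m)` and `(2m)! ≤ 4^m (m!)^2` give
`(ν + n) |C_n^ν(α)| ≤ ρ_ν Γ(ν + n + 1) 4^n / n!` and
`φ_{ν,n}(ξ) ≤ ξ^n cosh ξ / (2^ν 2^n Γ(ν + n + 1))`. The Gamma factors cancel in the product,
leaving `ρ_ν e^ξ 2^(-ν) n (n + 2ν) (2ξ)^n / n!`, an exponential-type series whose sum over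
`n ≥ 1` is `ρ_ν e^ξ 2^(-ν) · 2ξ (2ξ + 2ν + 1) e^(2ξ)`. -/

open Finset Real
open scoped Nat

theorem Nat.factorial_two_mul_le_four_pow_mul_sq (m : ℕ) : (2 * m)! ≤ 4 ^ m * m ! ^ 2 := by
  have h := Nat.choose_mul_factorial_mul_factorial (Nat.le_mul_of_pos_left m two_pos)
  rw [two_mul, Nat.add_sub_cancel, ← two_mul, ← Nat.centralBinom_eq_two_mul_choose] at h
  rw [← h, mul_assoc, ← sq]
  exact Nat.mul_le_mul_right _ (Nat.centralBinom_le_four_pow m)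

theorem Nat.sum_range_choose_two_mul_le (n : ℕ) :
    ∑ m ∈ range (n / 2 + 1), n.choose (2 * m) ≤ 2 ^ n := by
  rw [← Nat.sum_range_choose n,
    ← sum_image (g := (2 * ·)) (by intro a _ b _ h; simpa using h)]
  refine sum_le_sum_of_subset fun k hk => ?_
  simp only [mem_image, mem_range] at hk ⊢
  omega

theorem Real.Gamma_mul_factorial_le {x : ℝ} (hx : 1 ≤ x) (m : ℕ) :
    Gamma x * m ! ≤ Gamma (x + m) := by
  induction m with
  | zero => simp
  | succ m ih =>
    rw [Nat.factorial_succ, Nat.cast_mul, Nat.cast_succ, ← add_assoc,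
      Gamma_add_one (by positivity), mul_left_comm]
    exact mul_le_mul (by linarith) ih (by positivity) (by positivity)

theorem Real.hasSum_natCast_add_mul_pow_div_factorial (x c : ℝ) :
    HasSum (fun n : ℕ => (n + c) * x ^ n / n !) ((x + c) * exp x) := by
  have hexp : HasSum (fun n : ℕ => x ^ n / n !) (exp x) := by
    rw [exp_eq_exp_ℝ]; exact NormedSpace.expSeries_div_hasSum_exp x
  have hmul : HasSum (fun n : ℕ => n * x ^ n / n !) (x * exp x) := by
    have hshift : ∀ n : ℕ, ((n : ℝ) + 1) * x ^ (n + 1) / (n + 1)! = x * (x ^ n / n !) := by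
      intro n
      rw [Nat.factorial_succ, pow_succ]
      push_cast
      field_simp
    rw [← hasSum_nat_add_iff' 1]
    simpa [hshift] using hexp.mul_left x
  convert hmul.add (hexp.mul_left c) using 2 with n
  · ring
  · ring

theorem phiBessel_term_le {ν ξ : ℝ} (hν : 0 ≤ ν) (hξ : 0 ≤ ξ) (n m : ℕ) :
    ξ ^ (n + 2 * m) /
        ((2 : ℝ) ^ (ν + n + 2 * (m : ℝ)) * Gamma ((m : ℝ) + 1) * Gamma (ν + n + m + 1)) ≤
      ξ ^ n / (2 ^ ν * 2 ^ n * Gamma (ν + n + 1)) * (ξ ^ (2 * m) / (2 * m)!) := by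
  have hsplit : (2 : ℝ) ^ (ν + n + 2 * (m : ℝ)) = 2 ^ ν * 2 ^ n * 4 ^ m := by
    rw [rpow_add two_pos, rpow_add two_pos, rpow_natCast, rpow_mul zero_le_two]
    norm_num
  have hfact : ((2 * m)! : ℝ) ≤ 4 ^ m * m ! ^ 2 := by
    exact_mod_cast Nat.factorial_two_mul_le_four_pow_mul_sq m
  have hGamma : Gamma (ν + n + 1) * m ! ≤ Gamma (ν + n + m + 1) := by
    rw [add_right_comm _ (m : ℝ)]
    exact Gamma_mul_factorial_le (le_add_of_nonneg_left (by positivity)) m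
  rw [hsplit, Gamma_nat_eq_factorial, div_mul_div_comm, ← pow_add]
  gcongr ξ ^ _ / ?_
  calc 2 ^ ν * 2 ^ n * Gamma (ν + n + 1) * ((2 * m)! : ℝ)
      ≤ 2 ^ ν * 2 ^ n * Gamma (ν + n + 1) * (4 ^ m * m ! ^ 2) := by gcongr
    _ = 2 ^ ν * 2 ^ n * 4 ^ m * m ! * (Gamma (ν + n + 1) * m !) := by ring
    _ ≤ 2 ^ ν * 2 ^ n * 4 ^ m * m ! * Gamma (ν + n + m + 1) := by gcongr

theorem phiBessel_nonneg {ν ξ : ℝ} (hν : 0 ≤ ν) (hξ : 0 ≤ ξ) (n : ℕ) : 0 ≤ phiBessel ν n ξ :=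
  tsum_nonneg fun m => by positivity

theorem phiBessel_le {ν ξ : ℝ} (hν : 0 ≤ ν) (hξ : 0 ≤ ξ) (n : ℕ) :
    phiBessel ν n ξ ≤ ξ ^ n * exp ξ / (2 ^ ν * 2 ^ n * Gamma (ν + n + 1)) := by
  have hcosh := (hasSum_cosh ξ).mul_left (ξ ^ n / (2 ^ ν * 2 ^ n * Gamma (ν + n + 1)))
  have hsum := Summable.of_nonneg_of_le (fun m => ?_) (phiBessel_term_le hν hξ n) hcosh.summable
  calc phiBessel ν n ξ ≤ ξ ^ n / (2 ^ ν * 2 ^ n * Gamma (ν + n + 1)) * cosh ξ :=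
        hasSum_le (phiBessel_term_le hν hξ n) hsum.hasSum hcosh
    _ ≤ ξ ^ n / (2 ^ ν * 2 ^ n * Gamma (ν + n + 1)) * exp ξ := by
        gcongr
        rw [cosh_eq]
        linarith [exp_le_exp.mpr (show -ξ ≤ ξ by linarith)]
    _ = ξ ^ n * exp ξ / (2 ^ ν * 2 ^ n * Gamma (ν + n + 1)) := div_mul_eq_mul_div _ _ _
  positivity

theorem rhoNu_pos {ν : ℝ} (hν : 0 ≤ ν) : 0 < rhoNu ν := by
  unfold rhoNu
  split_ifs with h
  · exact one_pos
  · have := Gamma_pos_of_pos (hν.lt_of_ne' h)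
    positivity

theorem gegenbauer_eq_rhoNu_mul (ν : ℝ) {n : ℕ} (hn : n ≠ 0) (x : ℝ) :
    gegenbauer ν n x = rhoNu ν * ∑ m ∈ range (n / 2 + 1),
      (-1 : ℝ) ^ m * Gamma (ν + n - m) * (2 * x) ^ (n - 2 * m) / (m ! * (n - 2 * m)! : ℝ) := by
  unfold gegenbauer rhoNu
  split_ifs with hν
  · subst hν
    rw [one_mul]
    refine sum_congr rfl fun m hm => ?_
    have h2m : 2 * m ≤ n := by rw [mem_range] at hm; omega
    rw [zero_add, ← Nat.cast_ofNat, ← Nat.cast_mul, ← Nat.cast_sub h2m, Gamma_nat_eq_factorial,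
      Gamma_nat_eq_factorial]
  · rfl

noncomputable def gegenbauerMajorant (ν : ℝ) (n : ℕ) : ℝ :=
  ∑ m ∈ range (n / 2 + 1), Gamma (ν + n - m) * 2 ^ (n - 2 * m) / (m ! * (n - 2 * m)! : ℝ)

theorem abs_neg_one_pow_mul_mul_pow_div_le {a d y : ℝ} (ha : 0 ≤ a) (hd : 0 ≤ d) (hy : |y| ≤ 2)
    (m k : ℕ) : |(-1) ^ m * a * y ^ k / d| ≤ a * 2 ^ k / d := by
  rw [abs_div, abs_mul, abs_mul, abs_neg_one_pow, one_mul, abs_of_nonneg ha, abs_of_nonneg hd,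
    abs_pow]
  gcongr

theorem abs_gegenbauer_le {ν : ℝ} (hν : 0 ≤ ν) {n : ℕ} (hn : n ≠ 0) {x : ℝ} (hx : |x| ≤ 1) :
    |gegenbauer ν n x| ≤ rhoNu ν * gegenbauerMajorant ν n := by
  have h2x : |2 * x| ≤ 2 := by rw [abs_mul, abs_two]; linarith
  rw [gegenbauer_eq_rhoNu_mul ν hn, abs_mul, abs_of_pos (rhoNu_pos hν)]
  refine mul_le_mul_of_nonneg_left ?_ (rhoNu_pos hν).le
  refine (abs_sum_le_sum_abs _ _).trans (sum_le_sum fun m hm => ?_)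
  have hmn : (m : ℝ) + 1 ≤ n := by
    rw [mem_range] at hm
    exact_mod_cast (by omega : m + 1 ≤ n)
  exact abs_neg_one_pow_mul_mul_pow_div_le (Gamma_nonneg_of_nonneg (by linarith)) (by positivity)
    h2x m _

theorem mul_gegenbauerMajorant_term_le {ν : ℝ} (hν : 0 ≤ ν) {n m : ℕ} (h2m : 2 * m ≤ n)
    (hmn : m < n) :
    (ν + n) * (Gamma (ν + n - m) * 2 ^ (n - 2 * m) / (m ! * (n - 2 * m)! : ℝ)) ≤
      Gamma (ν + n + 1) * 2 ^ n * n.choose (2 * m) / n ! := by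
  have hmn' : (m : ℝ) + 1 ≤ n := by exact_mod_cast hmn
  have hGamma : (ν + n) * Gamma (ν + n - m) * m ! ≤ Gamma (ν + n + 1) := by
    have := Gamma_mul_factorial_le (x := ν + n - m) (by linarith) m
    rw [sub_add_cancel] at this
    rw [Gamma_add_one (by linarith), mul_assoc]
    gcongr
  have hfact : (n ! : ℝ) ≤ n.choose (2 * m) * (4 ^ m * m ! ^ 2) * (n - 2 * m)! := by
    rw [← Nat.choose_mul_factorial_mul_factorial h2m]
    push_cast
    gcongr
    exact_mod_cast Nat.factorial_two_mul_le_four_pow_mul_sq m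
  have hpow : (2 : ℝ) ^ n = 2 ^ (n - 2 * m) * 4 ^ m := by
    rw [show (4 : ℝ) = 2 ^ 2 by norm_num, ← pow_mul, ← pow_add, Nat.sub_add_cancel (by omega)]
  have hchoose : (0 : ℝ) < n.choose (2 * m) := by exact_mod_cast Nat.choose_pos h2m
  calc (ν + n) * (Gamma (ν + n - m) * 2 ^ (n - 2 * m) / (m ! * (n - 2 * m)! : ℝ))
      = (ν + n) * Gamma (ν + n - m) * m ! * 2 ^ (n - 2 * m) / (m ! ^ 2 * (n - 2 * m)!) := by
        field_simp
    _ ≤ Gamma (ν + n + 1) * 2 ^ (n - 2 * m) / (m ! ^ 2 * (n - 2 * m)!) := by gcongr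
    _ = Gamma (ν + n + 1) * 2 ^ n * n.choose (2 * m) /
          (n.choose (2 * m) * (4 ^ m * m ! ^ 2) * (n - 2 * m)!) := by
        rw [hpow]
        field_simp
    _ ≤ Gamma (ν + n + 1) * 2 ^ n * n.choose (2 * m) / n ! := by gcongr

theorem mul_gegenbauerMajorant_le {ν : ℝ} (hν : 0 ≤ ν) {n : ℕ} (hn : n ≠ 0) :
    (ν + n) * gegenbauerMajorant ν n ≤ Gamma (ν + n + 1) * 4 ^ n / n ! := by
  have hchoose : (∑ m ∈ range (n / 2 + 1), n.choose (2 * m) : ℝ) ≤ 2 ^ n := by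
    exact_mod_cast Nat.sum_range_choose_two_mul_le n
  calc (ν + n) * gegenbauerMajorant ν n
      ≤ ∑ m ∈ range (n / 2 + 1), Gamma (ν + n + 1) * 2 ^ n * n.choose (2 * m) / n ! := by
        rw [gegenbauerMajorant, mul_sum]
        refine sum_le_sum fun m hm => ?_
        rw [mem_range] at hm
        exact mul_gegenbauerMajorant_term_le hν (by omega) (by omega)
    _ = Gamma (ν + n + 1) * 2 ^ n / n ! * ∑ m ∈ range (n / 2 + 1), (n.choose (2 * m) : ℝ) := by
        rw [mul_sum]
        exact sum_congr rfl fun m _ => by ring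
    _ ≤ Gamma (ν + n + 1) * 2 ^ n / n ! * 2 ^ n := by gcongr
    _ = Gamma (ν + n + 1) * 4 ^ n / n ! := by
        rw [show (4 : ℝ) ^ n = 2 ^ n * 2 ^ n by rw [← mul_pow]; norm_num]
        ring

theorem gegenbauer_phiBessel_term_le {ν : ℝ} (hν : 0 ≤ ν) {x : ℝ} (hx : |x| ≤ 1) {ξ : ℝ}
    (hξ : 0 ≤ ξ) {n : ℕ} (hn : n ≠ 0) :
    (ν + n) * |gegenbauer ν n x| * (n * (n + 2 * ν)) * phiBessel ν n ξ ≤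
      rhoNu ν * exp ξ / 2 ^ ν * (n * (n + 2 * ν) * (2 * ξ) ^ n / n !) := by
  have hρ := rhoNu_pos hν
  have hΓ : 0 < Gamma (ν + n + 1) := Gamma_pos_of_pos (by positivity)
  have hC : (ν + n) * |gegenbauer ν n x| ≤ rhoNu ν * (Gamma (ν + n + 1) * 4 ^ n / n !) :=
    calc (ν + n) * |gegenbauer ν n x| ≤ (ν + n) * (rhoNu ν * gegenbauerMajorant ν n) := by
          gcongr
          exact abs_gegenbauer_le hν hn hx
      _ = rhoNu ν * ((ν + n) * gegenbauerMajorant ν n) := by ring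
      _ ≤ rhoNu ν * (Gamma (ν + n + 1) * 4 ^ n / n !) := by
          gcongr
          exact mul_gegenbauerMajorant_le hν hn
  calc (ν + n) * |gegenbauer ν n x| * (n * (n + 2 * ν)) * phiBessel ν n ξ
      = (ν + n) * |gegenbauer ν n x| * phiBessel ν n ξ * (n * (n + 2 * ν)) := by ring
    _ ≤ rhoNu ν * (Gamma (ν + n + 1) * 4 ^ n / n !) *
          (ξ ^ n * exp ξ / (2 ^ ν * 2 ^ n * Gamma (ν + n + 1))) * (n * (n + 2 * ν)) := by
        gcongr
        · exact phiBessel_nonneg hν hξ n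
        · exact phiBessel_le hν hξ n
    _ = rhoNu ν * exp ξ / 2 ^ ν * (n * (n + 2 * ν) * (2 * ξ) ^ n / n !) := by
        rw [show (4 : ℝ) ^ n = 2 ^ n * 2 ^ n by rw [← mul_pow]; norm_num, mul_pow]
        field_simp

/-- For every real `ν ≥ 0`, every real `α` with `|α| ≤ 1` and every real `ξ > 0`,
the series `∑_{n=1}^∞ (ν+n) |C_n^ν(α)| n(n+2ν) φ_{ν,n}(ξ)` converges and
`∑_{n=1}^∞ (ν+n) |C_n^ν(α)| n(n+2ν) φ_{ν,n}(ξ)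
  ≤ ρ_ν ξ² 2^(2−ν) e^(3ξ) + ρ_ν (2ν+1) ξ 2^(1−ν) e^(3ξ)`. -/
theorem gegenbauer_phi_series_bound (ν : ℝ) (hν : 0 ≤ ν) (α : ℝ) (hα : |α| ≤ 1)
    (ξ : ℝ) (hξ : 0 < ξ) :
    Summable (fun n : ℕ => (ν + ((n + 1 : ℕ) : ℝ)) * |gegenbauer ν (n + 1) α| *
      (((n + 1 : ℕ) : ℝ) * (((n + 1 : ℕ) : ℝ) + 2 * ν)) * phiBessel ν (n + 1) ξ) ∧
    ∑' n : ℕ, (ν + ((n + 1 : ℕ) : ℝ)) * |gegenbauer ν (n + 1) α| *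
        (((n + 1 : ℕ) : ℝ) * (((n + 1 : ℕ) : ℝ) + 2 * ν)) * phiBessel ν (n + 1) ξ ≤
      rhoNu ν * ξ ^ 2 * (2 : ℝ) ^ (2 - ν) * Real.exp (3 * ξ) +
        rhoNu ν * (2 * ν + 1) * ξ * (2 : ℝ) ^ (1 - ν) * Real.exp (3 * ξ) := by
  set K := rhoNu ν * exp ξ / 2 ^ ν * (2 * ξ) with hK
  have hbound : ∀ n : ℕ, (ν + ((n + 1 : ℕ) : ℝ)) * |gegenbauer ν (n + 1) α| *
      (((n + 1 : ℕ) : ℝ) * (((n + 1 : ℕ) : ℝ) + 2 * ν)) * phiBessel ν (n + 1) ξ ≤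
        K * ((n + (2 * ν + 1)) * (2 * ξ) ^ n / n !) := fun n =>
    (gegenbauer_phiBessel_term_le hν hα hξ.le n.succ_ne_zero).trans_eq (by
      rw [hK, Nat.factorial_succ, pow_succ]
      push_cast
      field_simp
      ring)
  have hseries := (hasSum_natCast_add_mul_pow_div_factorial (2 * ξ) (2 * ν + 1)).mul_left K
  have hsum := Summable.of_nonneg_of_le (fun n => ?_) hbound hseries.summable
  · refine ⟨hsum, (hasSum_le hbound hsum.hasSum hseries).trans_eq ?_⟩
    rw [hK, show 3 * ξ = ξ + 2 * ξ by ring, exp_add, rpow_sub two_pos, rpow_sub two_pos]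
    field_simp
    ring
  · have := phiBessel_nonneg hν hξ.le (n + 1)
    positivity
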